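/- arXiv:2205.10645 — 7 statements merged into one kernel-verified Lean document; each statement's English description precedes it below -/
import Mathlib

section
/- Let ψ be a power series with nonnegative coefficients, ψ(0) > 0, positive radius of convergence R, and suppose ψ is not a polynomial of degree ≤ 1 and lim_{t↑R} tψ'(t)/ψ(t) > 1. Let τ ∈ (0,R) be the unique point with τψ'(τ) = ψ(τ). Then the function t ↦ t/ψ(t) is strictly increasing on [0,τ), strictly decreasing on (τ,R), and attains its maximum on [0,R) at t = τ. -/
/-!
By the quotient rule, `(t / ψ t)' = (1 - m t) / ψ t`, and `ψ > 0` on `[0, R)` because its constant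
term is positive and all other terms are nonnegative. Since `m` is strictly increasing with
`m τ = 1`, the derivative is positive on `(0, τ)` and negative on `(τ, R)`.
-/

open Set

theorem isMaxOn_Ico_of_monotoneOn_of_antitoneOn {α β : Type*} [LinearOrder α] [Preorder β]
    {f : α → β} {a b c : α} (hmono : MonotoneOn f (Icc a c)) (hanti : AntitoneOn f (Ico c b))
    (hc : c ∈ Ico a b) : IsMaxOn f (Ico a b) c := by
  intro x hx
  rcases le_total x c with hxc | hcx
  · exact hmono ⟨hx.1, hxc⟩ ⟨hc.1, le_rfl⟩ hxc
  · exact hanti ⟨le_rfl, hc.2⟩ ⟨hcx, hx.2⟩ hcx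

section RatioMonotone

variable {ψ ψ' : ℝ → ℝ} {s : Set ℝ}

theorem hasDerivAt_id_div {x : ℝ} (h : HasDerivAt ψ (ψ' x) x) (hx : ψ x ≠ 0) :
    HasDerivAt (fun t => t / ψ t) ((1 - x * ψ' x / ψ x) / ψ x) x := by
  refine ((hasDerivAt_id' x).div h hx).congr_deriv ?_
  field_simp

theorem strictMonoOn_id_div (hs : Convex ℝ s) (hψ' : ∀ t ∈ s, HasDerivAt ψ (ψ' t) t)
    (hpos : ∀ t ∈ s, 0 < ψ t) (hmean : ∀ t ∈ interior s, t * ψ' t / ψ t < 1) :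
    StrictMonoOn (fun t => t / ψ t) s := by
  have hderiv t (ht : t ∈ s) := hasDerivAt_id_div (hψ' t ht) (hpos t ht).ne'
  refine strictMonoOn_of_deriv_pos hs
    (fun t ht => (hderiv t ht).continuousAt.continuousWithinAt) fun t ht => ?_
  have ht' := interior_subset ht
  rw [(hderiv t ht').deriv]
  exact div_pos (sub_pos.2 (hmean t ht)) (hpos t ht')

theorem strictAntiOn_id_div (hs : Convex ℝ s) (hψ' : ∀ t ∈ s, HasDerivAt ψ (ψ' t) t)
    (hpos : ∀ t ∈ s, 0 < ψ t) (hmean : ∀ t ∈ interior s, 1 < t * ψ' t / ψ t) :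
    StrictAntiOn (fun t => t / ψ t) s := by
  have hderiv t (ht : t ∈ s) := hasDerivAt_id_div (hψ' t ht) (hpos t ht).ne'
  refine strictAntiOn_of_deriv_neg hs
    (fun t ht => (hderiv t ht).continuousAt.continuousWithinAt) fun t ht => ?_
  have ht' := interior_subset ht
  rw [(hderiv t ht').deriv]
  exact div_neg_of_neg_of_pos (sub_neg.2 (hmean t ht)) (hpos t ht')

end RatioMonotone

theorem tsum_mul_pow_pos {a : ℕ → ℝ} (ha : ∀ n, 0 ≤ a n) (ha0 : 0 < a 0) {t : ℝ} (ht : 0 ≤ t)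
    (hsum : Summable fun n => a n * t ^ n) : 0 < ∑' n, a n * t ^ n :=
  hsum.tsum_pos (fun n => mul_nonneg (ha n) (pow_nonneg ht n)) 0 (by simpa using ha0)

theorem stmt_0_general (a : ℕ → ℝ) (ha : ∀ n, 0 ≤ a n) (ha0 : 0 < a 0)
    (R : ℝ)
    (hsum : ∀ t : ℝ, |t| < R → Summable (fun n => a n * t ^ n))
    (ψ ψ' : ℝ → ℝ)
    (hψ : ∀ t : ℝ, ψ t = ∑' n, a n * t ^ n)
    (hψ' : ∀ t : ℝ, |t| < R → HasDerivAt ψ (ψ' t) t)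
    (m : ℝ → ℝ) (hm : ∀ t, m t = t * ψ' t / ψ t)
    (hmono : StrictMonoOn m (Set.Ico 0 R))
    (τ : ℝ) (hτ : τ ∈ Set.Ioo 0 R) (hapex : τ * ψ' τ = ψ τ) :
    StrictMonoOn (fun t => t / ψ t) (Set.Ico 0 τ) ∧
    StrictAntiOn (fun t => t / ψ t) (Set.Ioo τ R) ∧
    (∀ t ∈ Set.Ico 0 R, t / ψ t ≤ τ / ψ τ) := by
  have habs {t} (ht : t ∈ Ico 0 R) : |t| < R := by rw [abs_of_nonneg ht.1]; exact ht.2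
  have hpos t (ht : t ∈ Ico 0 R) : 0 < ψ t := hψ t ▸ tsum_mul_pow_pos ha ha0 ht.1 (hsum t (habs ht))
  have hderiv t (ht : t ∈ Ico 0 R) : HasDerivAt ψ (ψ' t) t := hψ' t (habs ht)
  have hτ' : τ ∈ Ico 0 R := Ioo_subset_Ico_self hτ
  have hmτ : m τ = 1 := by rw [hm, hapex, div_self (hpos τ hτ').ne']
  have hleft : Icc 0 τ ⊆ Ico 0 R := Icc_subset_Ico_right hτ.2
  have hright : Ico τ R ⊆ Ico 0 R := Ico_subset_Ico_left hτ.1.le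
  have hinc : StrictMonoOn (fun t => t / ψ t) (Icc 0 τ) := by
    refine strictMonoOn_id_div (convex_Icc 0 τ) (fun t ht => hderiv t (hleft ht))
      (fun t ht => hpos t (hleft ht)) fun t ht => ?_
    rw [interior_Icc] at ht
    rw [← hm, ← hmτ]
    exact hmono (hleft (Ioo_subset_Icc_self ht)) hτ' ht.2
  have hdec : StrictAntiOn (fun t => t / ψ t) (Ico τ R) := by
    refine strictAntiOn_id_div (convex_Ico τ R) (fun t ht => hderiv t (hright ht))
      (fun t ht => hpos t (hright ht)) fun t ht => ?_
    rw [interior_Ico] at ht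
    rw [← hm, ← hmτ]
    exact hmono hτ' (hright (Ioo_subset_Ico_self ht)) ht.1
  exact ⟨hinc.mono Ico_subset_Icc_self, hdec.mono Ioo_subset_Ico_self,
    isMaxOn_iff.1 (isMaxOn_Ico_of_monotoneOn_of_antitoneOn hinc.monotoneOn hdec.antitoneOn hτ')⟩

/-- For a power series ψ with nonnegative coefficients, ψ(0) > 0,
radius of convergence R, whose mean function m(t) = tψ'(t)/ψ(t) is strictly increasing
with limit > 1, and apex τ ∈ (0,R) with τψ'(τ) = ψ(τ), the map t ↦ t/ψ(t) is
strictly increasing on [0,τ), strictly decreasing on (τ,R), and maximal at τ. -/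
theorem stmt_0 (a : ℕ → ℝ) (ha : ∀ n, 0 ≤ a n) (ha0 : 0 < a 0)
    (R : ℝ) (hR : 0 < R)
    (hsum : ∀ t : ℝ, |t| < R → Summable (fun n => a n * t ^ n))
    (ψ ψ' : ℝ → ℝ)
    (hψ : ∀ t : ℝ, ψ t = ∑' n, a n * t ^ n)
    (hψ' : ∀ t : ℝ, |t| < R → HasDerivAt ψ (ψ' t) t)
    (hnonlin : ∃ j, 2 ≤ j ∧ 0 < a j)
    (m : ℝ → ℝ) (hm : ∀ t, m t = t * ψ' t / ψ t)
    (hmono : StrictMonoOn m (Set.Ico 0 R))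
    (τ : ℝ) (hτ : τ ∈ Set.Ioo 0 R) (hapex : τ * ψ' τ = ψ τ) :
    StrictMonoOn (fun t => t / ψ t) (Set.Ico 0 τ) ∧
    StrictAntiOn (fun t => t / ψ t) (Set.Ioo τ R) ∧
    (∀ t ∈ Set.Ico 0 R, t / ψ t ≤ τ / ψ τ) :=
  stmt_0_general a ha ha0 R hsum ψ ψ' hψ hψ' m hm hmono τ hτ hapex
end

section
/- If g is a formal power series with g(0) = 0 satisfying Lagrange's equation g(z) = zψ(g(z)) for a formal power series ψ with ψ(0) ≠ 0, then for all n ≥ 1 the n-th coefficient of g equals (1/n) times the (n−1)-th coefficient of ψ(z)^n. -/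
/-!
Write `v = ψ(g)`, so that `g = X v` with `v` invertible, and split `ψⁿ = ∑_{i<n} aᵢ Xⁱ + Xⁿ T`,
so that `vⁿ = ∑_{i<n} aᵢ gⁱ + gⁿ T(g)`. Taking the coefficient of `X^(n-1)` in `v⁻ⁿ · F · g'`
amounts to taking the residue of `F g' / gⁿ`. For `F = vⁿ` this gives `n gₙ`, the coefficient of
`X^(n-1)` in `g'`. On the other side, `gⁱ g' / gⁿ` is a derivative for `i ≠ n - 1`, so it has no
residue, while `g' / g` has residue `1`; so the right-hand side contributes exactly `a_{n-1}`.
-/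

open PowerSeries

/-- Composition ψ(g) of formal power series, valid when g has zero constant term:
the n-th coefficient is Σ_{k ≤ n} ψ_k · coeff_n(g^k). -/
noncomputable def psComp {K : Type*} [CommRing K] (ψ g : PowerSeries K) : PowerSeries K :=
  PowerSeries.mk fun n => ∑ k ∈ Finset.range (n + 1),
    (PowerSeries.coeff (R := K) k ψ) * (PowerSeries.coeff (R := K) n (g ^ k))

namespace PowerSeries

variable {R : Type*} [CommRing R]

theorem coeff_pow_eq_zero_of_lt {g : R⟦X⟧} (hg : constantCoeff g = 0) {n k : ℕ} (h : n < k) :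
    coeff n (g ^ k) = 0 :=
  X_pow_dvd_iff.mp (pow_dvd_pow_of_dvd (X_dvd_iff.mpr hg) k) n h

theorem subst_eq_sum_add_pow_mul {g : R⟦X⟧} (hg : HasSubst g) (f : R⟦X⟧) (n : ℕ) :
    f.subst g = ∑ i ∈ Finset.range n, C (coeff i f) * g ^ i
      + g ^ n * (mk fun i ↦ coeff (i + n) f).subst g := by
  conv_lhs => rw [eq_X_pow_mul_shift_add_trunc n f]
  rw [subst_add hg, subst_mul hg, subst_pow hg, subst_X hg, subst_coe hg, Polynomial.aeval_def,
    eval₂_trunc_eq_sum_range, add_comm]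
  rfl

theorem constantCoeff_subst_of_constantCoeff_eq_zero {g : R⟦X⟧} (hg : constantCoeff g = 0)
    (f : R⟦X⟧) : constantCoeff (f.subst g) = constantCoeff f := by
  rw [subst_eq_sum_add_pow_mul (HasSubst.of_constantCoeff_zero' hg) f 1]
  simp [hg]

/-- The residue of `g' / g ^ (j + 1)` for `g = X * u`. -/
theorem coeff_inv_pow_succ_mul_derivative_X_mul [IsAddTorsionFree R] (u : R⟦X⟧ˣ) (j : ℕ) :
    coeff j ((↑u⁻¹ : R⟦X⟧) ^ (j + 1) * d⁄dX R (X * (u : R⟦X⟧))) = if j = 0 then 1 else 0 := by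
  set w : R⟦X⟧ := ↑u⁻¹
  have hwu : w * (u : R⟦X⟧) = 1 := u.inv_mul
  have hsplit : w ^ (j + 1) * d⁄dX R (X * (u : R⟦X⟧)) =
      w ^ j + X * (w ^ (j + 1) * d⁄dX R (u : R⟦X⟧)) := by
    rw [Derivation.leibniz, derivative_X, smul_eq_mul, smul_eq_mul]
    linear_combination w ^ j * hwu
  rw [hsplit]
  rcases j with _ | i
  · simp
  · have hderiv : d⁄dX R (w ^ (i + 1)) =
        -((i + 1 : ℕ) : R⟦X⟧) * (w ^ (i + 2) * d⁄dX R (u : R⟦X⟧)) := by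
      rw [derivative_pow, derivative_inv, Nat.add_sub_cancel]
      ring
    have hsum : (i + 1) • (coeff (i + 1) (w ^ (i + 1)) +
        coeff i (w ^ (i + 2) * d⁄dX R (u : R⟦X⟧))) = 0 := by
      have := coeff_derivative (w ^ (i + 1)) i
      rw [hderiv, neg_mul, map_neg, ← map_natCast (C (R := R)), coeff_C_mul] at this
      rw [smul_add, nsmul_eq_mul, nsmul_eq_mul]
      push_cast at this ⊢
      linear_combination -this
    rw [map_add, coeff_succ_X_mul, if_neg i.succ_ne_zero]
    exact nsmul_right_injective i.succ_ne_zero (by simpa using hsum)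

theorem inv_pow_add_mul_X_mul_pow (u : R⟦X⟧ˣ) (j k : ℕ) :
    (↑u⁻¹ : R⟦X⟧) ^ (k + j) * (X * (u : R⟦X⟧)) ^ j = X ^ j * (↑u⁻¹ : R⟦X⟧) ^ k := by
  have h : (↑u⁻¹ : R⟦X⟧) ^ j * (u : R⟦X⟧) ^ j = 1 := by rw [← mul_pow, u.inv_mul, one_pow]
  linear_combination ((↑u⁻¹ : R⟦X⟧) ^ k * X ^ j) * h

theorem coeff_inv_pow_mul_X_mul_pow_mul_derivative [IsAddTorsionFree R] (u : R⟦X⟧ˣ) {j m : ℕ}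
    (hj : j ≤ m) :
    coeff m ((↑u⁻¹ : R⟦X⟧) ^ (m + 1) * (X * (u : R⟦X⟧)) ^ j * d⁄dX R (X * (u : R⟦X⟧))) =
      if j = m then 1 else 0 := by
  obtain ⟨k, rfl⟩ := Nat.exists_eq_add_of_le hj
  rw [show j + k + 1 = k + 1 + j by ring, inv_pow_add_mul_X_mul_pow, mul_assoc, add_comm j k,
    coeff_X_pow_mul, coeff_inv_pow_succ_mul_derivative_X_mul]
  simp

theorem coeff_inv_pow_mul_X_mul_pow_mul_of_lt (u : R⟦X⟧ˣ) {m n : ℕ} (h : m < n) (f : R⟦X⟧) :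
    coeff m ((↑u⁻¹ : R⟦X⟧) ^ n * ((X * (u : R⟦X⟧)) ^ n * f)) = 0 := by
  have hX := inv_pow_add_mul_X_mul_pow u n 0
  rw [zero_add, pow_zero, mul_one] at hX
  rw [← mul_assoc, hX]
  exact X_pow_dvd_iff.mp (dvd_mul_right _ f) m h

theorem lagrange_inversion [IsAddTorsionFree R] {ψ g : R⟦X⟧} (hψ : IsUnit (constantCoeff ψ))
    (hg0 : constantCoeff g = 0) (hlag : g = X * ψ.subst g) (m : ℕ) :
    (m + 1) • coeff (m + 1) g = coeff m (ψ ^ (m + 1)) := by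
  have hsubst : HasSubst g := HasSubst.of_constantCoeff_zero' hg0
  obtain ⟨u, hu⟩ : IsUnit (ψ.subst g) :=
    isUnit_iff_constantCoeff.mpr (by rwa [constantCoeff_subst_of_constantCoeff_eq_zero hg0])
  set T := (mk fun i ↦ coeff (i + (m + 1)) (ψ ^ (m + 1))).subst g
  have hpow : (u : R⟦X⟧) ^ (m + 1) =
      ∑ i ∈ Finset.range (m + 1), C (coeff i (ψ ^ (m + 1))) * g ^ i + g ^ (m + 1) * T := by
    rw [hu, ← subst_pow hsubst, subst_eq_sum_add_pow_mul hsubst]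
  have hg : g = X * (u : R⟦X⟧) := by rw [hu]; exact hlag
  calc (m + 1) • coeff (m + 1) g = coeff m (d⁄dX R g) := by
        rw [coeff_derivative, nsmul_eq_mul, mul_comm]; push_cast; rfl
    _ = coeff m ((↑u⁻¹ : R⟦X⟧) ^ (m + 1) * (u : R⟦X⟧) ^ (m + 1) * d⁄dX R g) := by
        rw [← mul_pow, u.inv_mul, one_pow, one_mul]
    _ = ∑ i ∈ Finset.range (m + 1), coeff i (ψ ^ (m + 1)) *
          coeff m ((↑u⁻¹ : R⟦X⟧) ^ (m + 1) * g ^ i * d⁄dX R g) +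
        coeff m ((↑u⁻¹ : R⟦X⟧) ^ (m + 1) * (g ^ (m + 1) * (T * d⁄dX R g))) := by
        rw [hpow, mul_add, add_mul, Finset.mul_sum, Finset.sum_mul, map_add, map_sum]
        congr 1
        · refine Finset.sum_congr rfl fun i _ ↦ ?_
          rw [← coeff_C_mul]
          congr 1
          ring
        · congr 1
          ring
    _ = coeff m (ψ ^ (m + 1)) := by
        rw [hg, coeff_inv_pow_mul_X_mul_pow_mul_of_lt u m.lt_add_one, add_zero,
          Finset.sum_eq_single_of_mem m (Finset.self_mem_range_succ m),
          coeff_inv_pow_mul_X_mul_pow_mul_derivative u le_rfl, if_pos rfl, mul_one]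
        intro i hi him
        rw [coeff_inv_pow_mul_X_mul_pow_mul_derivative u (Finset.mem_range_succ_iff.mp hi),
          if_neg him, mul_zero]

end PowerSeries

theorem psComp_eq_subst {R : Type*} [CommRing R] {ψ g : R⟦X⟧} (hg : constantCoeff g = 0) :
    psComp ψ g = ψ.subst g := by
  ext n
  rw [coeff_subst' (HasSubst.of_constantCoeff_zero' hg), psComp, coeff_mk,
    finsum_eq_sum_of_support_subset _ (s := Finset.range (n + 1))]
  · rfl
  · intro k hk
    contrapose! hk
    simp [coeff_pow_eq_zero_of_lt hg (by simpa using hk)]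

/-- Lagrange inversion: if g(0) = 0 and g = z·ψ(g) with ψ(0) ≠ 0, then
for n ≥ 1, n · coeff_n(g) = coeff_{n−1}(ψ^n). -/
theorem stmt_2 {K : Type*} [Field K] [CharZero K] (ψ g : PowerSeries K)
    (hg0 : PowerSeries.constantCoeff (R := K) g = 0)
    (hψ0 : PowerSeries.constantCoeff (R := K) ψ ≠ 0)
    (hlag : g = PowerSeries.X * psComp ψ g) :
    ∀ n : ℕ, 1 ≤ n →
      PowerSeries.coeff (R := K) n g = (1 / (n : K)) * PowerSeries.coeff (R := K) (n - 1) (ψ ^ n) := by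
  intro n hn
  obtain ⟨m, rfl⟩ := Nat.exists_eq_add_of_le' hn
  rw [psComp_eq_subst hg0] at hlag
  have h := lagrange_inversion (Ne.isUnit hψ0) hg0 hlag m
  rw [nsmul_eq_mul] at h
  rw [Nat.add_sub_cancel, ← h]
  field_simp
end

section
/- Let ψ(z) = Σ_{n≥0} b_n z^n have nonnegative coefficients with b_0 > 0, apex τ ∈ (0,R_ψ) (i.e. τψ'(τ)=ψ(τ)), and set ρ = τ/ψ(τ). Define the sequence of functions g_n on the closed disk {|z| ≤ ρ} by g_0(z) = b_0 z and g_n(z) = zψ(g_{n−1}(z)). Then for every n ≥ 0 and every |z| ≤ ρ, one has |g_n(z)| < τ. -/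
open Complex

/-! The bound `|ψ(w)| ≤ ψ(|w|)` together with strict monotonicity of `ψ` on `[0, τ]` shows that
`w ↦ z ψ(w)` maps the disk `|w| < τ` into itself whenever `|z| ≤ ρ`, because `ρ ψ(τ) = τ`.
The start `g₀(z) = z ψ(0)` lies in that disk since `ψ(0) = b₀ < ψ(τ)`; the strictness of both
monotonicity statements needs a nonzero coefficient `b_k` with `k ≥ 1`, which the apex equation
forces (otherwise `τ ψ'(τ) = 0 ≠ b₀ = ψ(τ)`). -/

theorem exists_coeff_ne_zero_of_apex {b : ℕ → ℝ} {τ : ℝ} (hb0 : b 0 ≠ 0)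
    (hapex : τ * ∑' n : ℕ, (n : ℝ) * b n * τ ^ (n - 1) = ∑' n, b n * τ ^ n) :
    ∃ k, k ≠ 0 ∧ b k ≠ 0 := by
  by_contra! hb
  have hderiv : ∀ n : ℕ, (n : ℝ) * b n * τ ^ (n - 1) = 0 := by
    intro n
    rcases eq_or_ne n 0 with rfl | hn
    · simp
    · simp [hb n hn]
  have hvalue : ∑' n, b n * τ ^ n = b 0 := by
    rw [tsum_eq_single 0 fun n hn => by simp [hb n hn]]
    simp
  simp only [hderiv, tsum_zero, mul_zero, hvalue] at hapex
  exact hb0 hapex.symm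

theorem tsum_mul_zero_pow (b : ℕ → ℝ) : ∑' n, b n * 0 ^ n = b 0 := by
  rw [tsum_eq_single 0 fun n hn => by simp [hn]]
  simp

theorem tsum_mul_pow_lt_of_lt {b : ℕ → ℝ} (hb : ∀ n, 0 ≤ b n) {k : ℕ} (hk : k ≠ 0)
    (hbk : 0 < b k) {s t : ℝ} (hs : 0 ≤ s) (hst : s < t) (ht : Summable fun n => b n * t ^ n) :
    ∑' n, b n * s ^ n < ∑' n, b n * t ^ n := by
  have hle : ∀ n, b n * s ^ n ≤ b n * t ^ n := fun n =>
    mul_le_mul_of_nonneg_left (pow_le_pow_left₀ hs hst.le n) (hb n)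
  have hs_summable : Summable fun n => b n * s ^ n :=
    ht.of_nonneg_of_le (fun n => mul_nonneg (hb n) (pow_nonneg hs n)) hle
  exact hs_summable.tsum_lt_tsum hle
    (mul_lt_mul_of_pos_left (pow_lt_pow_left₀ hst hs hk) hbk) ht

theorem norm_tsum_mul_pow_le {b : ℕ → ℝ} (hb : ∀ n, 0 ≤ b n) {w : ℂ}
    (hw : Summable fun n => b n * ‖w‖ ^ n) :
    ‖∑' n, (b n : ℂ) * w ^ n‖ ≤ ∑' n, b n * ‖w‖ ^ n := by
  have hnorm : ∀ n, ‖(b n : ℂ) * w ^ n‖ = b n * ‖w‖ ^ n := fun n => by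
    rw [norm_mul, norm_pow, Complex.norm_real, Real.norm_of_nonneg (hb n)]
  simp only [← hnorm] at hw ⊢
  exact norm_tsum_le_tsum_norm hw

theorem stmt_4_general (b : ℕ → ℝ) (hb : ∀ n, 0 ≤ b n) (hb0 : 0 < b 0)
    (R : ℝ)
    (hsum : ∀ r : ℝ, 0 ≤ r → r < R → Summable (fun n => b n * r ^ n))
    (ψ : ℂ → ℂ) (hψ : ∀ z : ℂ, ψ z = ∑' n, (b n : ℂ) * z ^ n)
    (ψR ψR' : ℝ → ℝ)
    (hψR : ∀ t : ℝ, ψR t = ∑' n, b n * t ^ n)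
    (hψR' : ∀ t : ℝ, ψR' t = ∑' n : ℕ, (n : ℝ) * b n * t ^ (n - 1))
    (τ : ℝ) (hτ : τ ∈ Set.Ioo 0 R) (hapex : τ * ψR' τ = ψR τ)
    (ρ : ℝ) (hρ : ρ = τ / ψR τ)
    (g : ℕ → ℂ → ℂ)
    (hg0 : ∀ z, g 0 z = (b 0 : ℂ) * z)
    (hgrec : ∀ n z, g (n + 1) z = z * ψ (g n z)) :
    ∀ n : ℕ, ∀ z : ℂ, ‖z‖ ≤ ρ → ‖g n z‖ < τ := by
  obtain ⟨hτ0, hτR⟩ := hτ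
  rw [hψR, hψR'] at hapex
  obtain ⟨k, hk, hbk⟩ := exists_coeff_ne_zero_of_apex hb0.ne' hapex
  have hbk : 0 < b k := (hb k).lt_of_ne' hbk
  have hψR_lt : ∀ s, 0 ≤ s → s < τ → ψR s < ψR τ := fun s hs hsτ => by
    simpa only [hψR] using tsum_mul_pow_lt_of_lt hb hk hbk hs hsτ (hsum τ hτ0.le hτR)
  have hb0_lt : b 0 < ψR τ := by simpa only [hψR, tsum_mul_zero_pow] using hψR_lt 0 le_rfl hτ0
  have hψ_lt : ∀ w : ℂ, ‖w‖ < τ → ‖ψ w‖ < ψR τ := fun w hw =>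
    calc ‖ψ w‖ ≤ ψR ‖w‖ := by
          simpa only [hψ, hψR] using
            norm_tsum_mul_pow_le hb (hsum _ (norm_nonneg w) (hw.trans hτR))
      _ < ψR τ := hψR_lt _ (norm_nonneg w) hw
  have hρ0 : 0 < ρ := hρ ▸ div_pos hτ0 (hb0.trans hb0_lt)
  have hmul_lt : ∀ z c : ℂ, ‖z‖ ≤ ρ → ‖c‖ < ψR τ → ‖z * c‖ < τ := fun z c hz hc =>
    calc ‖z * c‖ ≤ ρ * ‖c‖ := by rw [norm_mul]; gcongr
      _ < ρ * ψR τ := by gcongr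
      _ = τ := by rw [hρ, div_mul_cancel₀ _ (hb0.trans hb0_lt).ne']
  intro n z hz
  induction n with
  | zero =>
    rw [hg0, mul_comm]
    exact hmul_lt z _ hz (by rwa [Complex.norm_real, Real.norm_of_nonneg hb0.le])
  | succ n ih => exact hgrec n z ▸ hmul_lt z _ hz (hψ_lt _ ih)

/-- Let ψ(z) = Σ b_n z^n have nonnegative coefficients, b_0 > 0, apex τ
(τψ'(τ) = ψ(τ)) in (0, R_ψ), and ρ = τ/ψ(τ). The iterates g_0(z) = b_0 z,
g_n(z) = zψ(g_{n−1}(z)) satisfy |g_n(z)| < τ for all |z| ≤ ρ. -/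
theorem stmt_4 (b : ℕ → ℝ) (hb : ∀ n, 0 ≤ b n) (hb0 : 0 < b 0)
    (R : ℝ) (hR : 0 < R)
    (hsum : ∀ r : ℝ, 0 ≤ r → r < R → Summable (fun n => b n * r ^ n))
    (ψ : ℂ → ℂ) (hψ : ∀ z : ℂ, ψ z = ∑' n, (b n : ℂ) * z ^ n)
    (ψR ψR' : ℝ → ℝ)
    (hψR : ∀ t : ℝ, ψR t = ∑' n, b n * t ^ n)
    (hψR' : ∀ t : ℝ, ψR' t = ∑' n : ℕ, (n : ℝ) * b n * t ^ (n - 1))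
    (τ : ℝ) (hτ : τ ∈ Set.Ioo 0 R) (hapex : τ * ψR' τ = ψR τ)
    (ρ : ℝ) (hρ : ρ = τ / ψR τ)
    (g : ℕ → ℂ → ℂ)
    (hg0 : ∀ z, g 0 z = (b 0 : ℂ) * z)
    (hgrec : ∀ n z, g (n + 1) z = z * ψ (g n z)) :
    ∀ n : ℕ, ∀ z : ℂ, ‖z‖ ≤ ρ → ‖g n z‖ < τ :=
  stmt_4_general b hb hb0 R hsum ψ hψ ψR ψR' hψR hψR' τ hτ hapex ρ hρ g hg0 hgrec
end

section
/- Let ψ ∈ K* with apex τ, ρ = τ/ψ(τ), g the solution of Lagrange's equation with data ψ, and G(z,w) = z(ψ(w) − ψ(0)). Then for every k ≥ 0, (∂G_k/∂w)(ρ, τ) ≠ 0. -/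
/-- Let ψ ∈ K* (nonnegative coefficients, ψ(0) > 0) with apex τ
(τψ'(τ) = ψ(τ)), ρ = τ/ψ(τ), g the solution of Lagrange's equation with data ψ
(so g(ρ) = τ), and G(z,w) = z(ψ(w) − ψ(0)). Then for every k ≥ 0 the k-th iterate
of G in the second variable satisfies (∂G_k/∂w)(ρ, τ) ≠ 0. -/
theorem stmt_9 (b : ℕ → ℝ) (hb : ∀ n, 0 ≤ b n) (hb0 : 0 < b 0)
    (R : ℝ) (hR : 0 < R)
    (hsum : ∀ t : ℝ, |t| < R → Summable (fun n => b n * t ^ n))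
    (ψ ψ' : ℝ → ℝ)
    (hψ : ∀ t : ℝ, ψ t = ∑' n, b n * t ^ n)
    (hψ' : ∀ t : ℝ, ψ' t = ∑' n : ℕ, (n : ℝ) * b n * t ^ (n - 1))
    (hψd : ∀ t : ℝ, |t| < R → HasDerivAt ψ (ψ' t) t)
    (τ : ℝ) (hτ : τ ∈ Set.Ioo 0 R) (hapex : τ * ψ' τ = ψ τ)
    (ρ : ℝ) (hρ : ρ = τ / ψ τ)
    (g : ℝ → ℝ) (hg0 : g 0 = 0)
    (hlag : ∀ z : ℝ, |z| ≤ ρ → g z = z * ψ (g z))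
    (hgτ : g ρ = τ)
    (hgbound : ∀ z : ℝ, |z| ≤ ρ → |g z| ≤ τ)
    (G : ℝ → ℝ → ℝ) (hG : ∀ z w, G z w = z * (ψ w - b 0))
    (Gk : ℕ → ℝ → ℝ → ℝ)
    (hGk0 : ∀ z w, Gk 0 z w = w)
    (hGkrec : ∀ k z w, Gk (k + 1) z w = G z (Gk k z w)) :
    ∀ k : ℕ, deriv (fun w => Gk k ρ w) τ ≠ 0 := by
  obtain ⟨hτ0, hτR⟩ := hτ
  have habs : ∀ t : ℝ, 0 < t → t ≤ τ → |t| < R := by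
    intro t ht htτ
    rw [abs_of_pos ht]; linarith
  have hτabs : |τ| < R := habs τ hτ0 le_rfl
  -- ψ τ is positive
  have hψpos : ∀ t : ℝ, 0 ≤ t → t < R → 0 < ψ t := by
    intro t ht htR
    rw [hψ]
    have hs := hsum t (by rw [abs_of_nonneg ht]; exact htR)
    have h0 : b 0 * t ^ 0 ≤ ∑' n, b n * t ^ n :=
      Summable.le_tsum hs 0 (fun i _ => mul_nonneg (hb i) (pow_nonneg ht i))
    simpa using lt_of_lt_of_le (by simpa using hb0) h0
  have hψτpos : 0 < ψ τ := hψpos τ hτ0.le hτR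
  have hρpos : 0 < ρ := by rw [hρ]; positivity
  have hρψτ : ρ * ψ τ = τ := by
    rw [hρ]; field_simp
  -- there is a positive coefficient of positive index
  have hm : ∃ m : ℕ, 1 ≤ m ∧ 0 < b m := by
    by_contra h
    push_neg at h
    have hz : ∀ n : ℕ, 1 ≤ n → b n = 0 := fun n hn => le_antisymm (h n hn) (hb n)
    have hψ'τ : ψ' τ = 0 := by
      rw [hψ']
      have : (fun n : ℕ => (n : ℝ) * b n * τ ^ (n - 1)) = fun _ => 0 := by
        funext n
        match n with
        | 0 => simp
        | Nat.succ k => rw [hz (k + 1) (Nat.le_add_left 1 k)]; ring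
      rw [this, tsum_zero]
    rw [hψ'τ, mul_zero] at hapex
    exact absurd hapex.symm (ne_of_gt hψτpos)
  obtain ⟨m, hm1, hbm⟩ := hm
  -- summability of the derivative series
  have hS : ∀ t : ℝ, 0 < t → t ≤ τ →
      Summable (fun n : ℕ => (n : ℝ) * b n * t ^ (n - 1)) := by
    intro t ht htτ
    set r : ℝ := (τ + R) / 2 with hrdef
    have hτr : τ < r := by rw [hrdef]; linarith
    have hrR : r < R := by rw [hrdef]; linarith
    have hr0 : 0 < r := lt_trans hτ0 hτr
    have hsr : Summable (fun n => b n * r ^ n) :=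
      hsum r (by rw [abs_of_pos hr0]; exact hrR)
    have hM : ∀ n, b n * r ^ n ≤ ∑' k, b k * r ^ k := fun n =>
      Summable.le_tsum hsr n (fun i _ => mul_nonneg (hb i) (pow_nonneg hr0.le i))
    set M : ℝ := ∑' k, b k * r ^ k with hMdef
    have htr : t < r := lt_of_le_of_lt htτ hτr
    have hgeo : Summable (fun n : ℕ => (n : ℝ) ^ 1 * (t / r) ^ n) := by
      apply summable_pow_mul_geometric_of_norm_lt_one
      rw [Real.norm_eq_abs, abs_of_pos (div_pos ht hr0)]
      exact (div_lt_one hr0).mpr htr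
    have hgeo' := hgeo.mul_left (M / t)
    apply Summable.of_nonneg_of_le _ _ hgeo'
    · intro n
      exact mul_nonneg (mul_nonneg (Nat.cast_nonneg n) (hb n))
        (pow_nonneg ht.le _)
    · intro n
      match n with
      | 0 => simp
      | Nat.succ k =>
        have hbk := hM (k + 1)
        have h1 : (t / r) ^ (k + 1) = t ^ (k + 1) / r ^ (k + 1) := div_pow t r (k + 1)
        have h2 : ((k : ℝ) + 1) * b (k + 1) * t ^ k
            = (((k : ℝ) + 1) * t ^ k / r ^ (k + 1)) * (b (k + 1) * r ^ (k + 1)) := by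
          field_simp
        have h3 : M / t * (((k : ℝ) + 1) ^ 1 * (t / r) ^ (k + 1))
            = (((k : ℝ) + 1) * t ^ k / r ^ (k + 1)) * M := by
          rw [h1]
          field_simp
          ring
        simp only [Nat.succ_eq_add_one, Nat.add_sub_cancel, Nat.cast_add, Nat.cast_one]
        rw [h2, h3]
        apply mul_le_mul_of_nonneg_left hbk
        positivity
  -- positivity of ψ' on (0, τ]
  have hψ'pos : ∀ t : ℝ, 0 < t → t ≤ τ → 0 < ψ' t := by
    intro t ht htτ
    rw [hψ']
    have hterm : 0 < (m : ℝ) * b m * t ^ (m - 1) := by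
      apply mul_pos (mul_pos _ hbm) (pow_pos ht _)
      exact_mod_cast Nat.lt_of_lt_of_le Nat.zero_lt_one hm1
    refine lt_of_lt_of_le hterm (Summable.le_tsum (hS t ht htτ) m (fun i _ => ?_))
    exact mul_nonneg (mul_nonneg (Nat.cast_nonneg i) (hb i)) (pow_nonneg ht.le _)
  -- ψ is monotone on [0, τ]
  have hmono : ∀ s t : ℝ, 0 ≤ s → s ≤ t → t ≤ τ → ψ s ≤ ψ t := by
    intro s t hs hst htτ
    rw [hψ, hψ]
    apply Summable.tsum_le_tsum _ (hsum s (by rw [abs_of_nonneg hs]; linarith))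
      (hsum t (by rw [abs_of_nonneg (le_trans hs hst)]; linarith))
    intro n
    exact mul_le_mul_of_nonneg_left (pow_le_pow_left₀ hs hst n) (hb n)
  -- ψ t > b 0 for 0 < t ≤ τ
  have hψgt : ∀ t : ℝ, 0 < t → t ≤ τ → b 0 < ψ t := by
    intro t ht htτ
    rw [hψ]
    have hs := hsum t (by rw [abs_of_pos ht]; linarith)
    have hne : (0 : ℕ) ≠ m := by omega
    have hsum2 : ∑ i ∈ ({0, m} : Finset ℕ), b i * t ^ i ≤ ∑' n, b n * t ^ n := by
      apply Summable.sum_le_tsum _ (fun i _ => mul_nonneg (hb i) (pow_nonneg ht.le i)) hs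
    rw [Finset.sum_pair hne] at hsum2
    have : b 0 < b 0 * t ^ 0 + b m * t ^ m := by
      have := mul_pos hbm (pow_pos ht m)
      simp only [pow_zero, mul_one]
      linarith
    linarith
  -- main induction
  suffices H : ∀ k : ℕ, (∃ d : ℝ, HasDerivAt (fun w => Gk k ρ w) d τ ∧ d ≠ 0)
      ∧ 0 < Gk k ρ τ ∧ Gk k ρ τ ≤ τ by
    intro k
    obtain ⟨⟨d, hd, hd0⟩, _, _⟩ := H k
    rw [hd.deriv]; exact hd0
  intro k
  induction k with
  | zero =>
    refine ⟨⟨1, ?_, one_ne_zero⟩, by rw [hGk0]; exact hτ0, by rw [hGk0]⟩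
    have : (fun w => Gk 0 ρ w) = fun w => w := funext fun w => hGk0 ρ w
    rw [this]
    exact hasDerivAt_id τ
  | succ k ih =>
    obtain ⟨⟨d, hd, hd0⟩, hu0, huτ⟩ := ih
    set u := Gk k ρ τ with hudef
    have huR : |u| < R := habs u hu0 huτ
    have hderivψ : HasDerivAt ψ (ψ' u) u := hψd u huR
    have hcomp : HasDerivAt (fun w => ρ * (ψ (Gk k ρ w) - b 0)) (ρ * (ψ' u * d)) τ :=
      ((hderivψ.comp τ hd).sub_const (b 0)).const_mul ρ
    have heq : (fun w => Gk (k + 1) ρ w) = fun w => ρ * (ψ (Gk k ρ w) - b 0) :=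
      funext fun w => by rw [hGkrec, hG]
    have hval : Gk (k + 1) ρ τ = ρ * (ψ u - b 0) := by rw [hGkrec, hG]
    refine ⟨⟨ρ * (ψ' u * d), heq ▸ hcomp,
      mul_ne_zero hρpos.ne' (mul_ne_zero (hψ'pos u hu0 huτ).ne' hd0)⟩, ?_, ?_⟩
    · rw [hval]
      have := hψgt u hu0 huτ
      apply mul_pos hρpos
      linarith
    · rw [hval]
      have h1 : ψ u ≤ ψ τ := hmono u τ hu0.le huτ le_rfl
      have h2 : ρ * (ψ u - b 0) ≤ ρ * (ψ τ - b 0) := by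
        apply mul_le_mul_of_nonneg_left _ hρpos.le
        linarith
      have h3 : ρ * (ψ τ - b 0) = τ - ρ * b 0 := by
        rw [mul_sub, hρψτ]
      have h4 : 0 ≤ ρ * b 0 := mul_nonneg hρpos.le (hb 0)
      linarith
end

section
/- Let Q ≥ 1 and let B(z) = Σ_j b_{jQ} z^{jQ} and C(z) = Σ_j c_{jQ} z^{jQ} be power series with nonnegative coefficients supported on multiples of Q, and D = B·C with coefficients d_n. Suppose there are positive constants C₀, r, α, β with α < 1 < β such that b_n = O(n^{−β} r^{−n}) and c_n ~ C₀ n^{−α} r^{−n} as n → ∞ along multiples of Q, and B(r) ≠ 0. Then d_n ~ B(r)·c_n as n → ∞ along multiples of Q. -/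
/-!
Writing `f j = b_{Qj} r^{Qj}` and `g j = c_{Qj} r^{Qj}` reduces the claim to
`(∑_{m ≤ n} f m * g (n - m)) / g n → ∑ f` for `f = O(n^{-β})` and `g n ~ C n^{-α}`.
Split the convolution at `m = n / 2`. For `m ≤ n / 2` the ratio `g (n - m) / g n` tends to `1`
for each fixed `m` and is bounded uniformly, so dominated convergence gives `∑ f`. For
`m > n / 2` we have `f m = O(n^{-β})`, while `∑_{k < n} |g k| = O(n^{1-α})` because `α < 1`;
after division by `g n ≍ n^{-α}` this part is `O(n^{1-β}) → 0`.
-/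

open Filter Real Topology Finset Asymptotics

lemma rpow_neg_le_two_rpow_mul_rpow_neg {x y γ : ℝ} (hγ : 0 ≤ γ) (hy : 0 < y) (hxy : y / 2 ≤ x) :
    x ^ (-γ) ≤ 2 ^ γ * y ^ (-γ) :=
  calc x ^ (-γ) ≤ (y / 2) ^ (-γ) := rpow_le_rpow_of_nonpos (by positivity) hxy (by linarith)
    _ = 2 ^ γ * y ^ (-γ) := by
      rw [div_rpow hy.le zero_le_two, rpow_neg zero_le_two, div_inv_eq_mul, mul_comm]

lemma isBigO_rpow_neg_natCast_add_one {γ : ℝ} (hγ : 0 ≤ γ) :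
    (fun n : ℕ => (n : ℝ) ^ (-γ)) =O[atTop] fun n => ((n : ℝ) + 1) ^ (-γ) := by
  refine IsBigO.of_bound (2 ^ γ) ?_
  filter_upwards [eventually_ge_atTop 1] with n hn
  have hn : (1 : ℝ) ≤ n := by exact_mod_cast hn
  rw [norm_of_nonneg (by positivity), norm_of_nonneg (by positivity)]
  exact rpow_neg_le_two_rpow_mul_rpow_neg hγ (by positivity) (by linarith)

lemma sum_range_rpow_neg_le {a : ℝ} (ha₀ : 0 ≤ a) (ha₁ : a < 1) (n : ℕ) :
    ∑ k ∈ range n, ((k : ℝ) + 1) ^ (-a) ≤ (n : ℝ) ^ (1 - a) / (1 - a) := by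
  induction n with
  | zero => simp [zero_rpow (by linarith : (1 : ℝ) - a ≠ 0)]
  | succ n ih =>
    have hn : (0 : ℝ) < n + 1 := by positivity
    have hamgm := geom_mean_le_arith_mean2_weighted (by linarith) ha₀ n.cast_nonneg hn.le
      (by ring : 1 - a + a = 1)
    have hstep : (n : ℝ) ^ (1 - a) + (1 - a) * ((n : ℝ) + 1) ^ (-a) ≤ ((n : ℝ) + 1) ^ (1 - a) := by
      rw [← mul_le_mul_iff_of_pos_right (rpow_pos_of_pos hn a), add_mul, mul_assoc,
        ← rpow_add hn, ← rpow_add hn, neg_add_cancel, sub_add_cancel, rpow_zero, rpow_one]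
      linarith
    rw [sum_range_succ, Nat.cast_succ, le_div_iff₀ (by linarith)]
    rw [le_div_iff₀ (by linarith)] at ih
    linarith

lemma tendsto_natCast_sub_rpow_div_rpow (γ : ℝ) (m : ℕ) :
    Tendsto (fun n : ℕ => ((n - m : ℕ) : ℝ) ^ γ / (n : ℝ) ^ γ) atTop (𝓝 1) := by
  have hlim : Tendsto (fun n : ℕ => (1 - (m : ℝ) / n) ^ γ) atTop (𝓝 1) := by
    have h := (tendsto_const_div_atTop_nhds_zero_nat (m : ℝ)).const_sub 1
    rw [sub_zero] at h
    simpa using h.rpow_const (Or.inl one_ne_zero)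
  refine hlim.congr' ?_
  filter_upwards [eventually_gt_atTop m] with n hn
  have hn₀ : (0 : ℝ) < n := by exact_mod_cast (Nat.zero_le m).trans_lt hn
  rw [Nat.cast_sub hn.le, ← div_rpow (by simpa using hn.le) hn₀.le, sub_div, div_self hn₀.ne']

lemma tendsto_sub_div_of_tendsto_div_rpow {g : ℕ → ℝ} {α C : ℝ} (hC : C ≠ 0)
    (hg : Tendsto (fun n => g n / (n : ℝ) ^ (-α)) atTop (𝓝 C)) (m : ℕ) :
    Tendsto (fun n => g (n - m) / g n) atTop (𝓝 1) := by
  have h := ((hg.comp (tendsto_sub_atTop_nat m)).mul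
    (tendsto_natCast_sub_rpow_div_rpow (-α) m)).div hg hC
  rw [mul_one, div_self hC] at h
  refine h.congr' ?_
  filter_upwards [eventually_gt_atTop m] with n hn
  have hnm : (0 : ℝ) < (n - m : ℕ) := by exact_mod_cast Nat.sub_pos_of_lt hn
  have hn : (0 : ℝ) < n := by exact_mod_cast (Nat.zero_le m).trans_lt hn
  simp only [Pi.div_apply, Function.comp_apply]
  rw [div_mul_div_cancel₀ (rpow_pos_of_pos hnm _).ne',
    div_div_div_cancel_right₀ (rpow_pos_of_pos hn _).ne']

lemma exists_abs_sub_div_le_of_isTheta {g : ℕ → ℝ} {α : ℝ} (hα : 0 ≤ α)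
    (hg : g =Θ[atTop] fun n => (n : ℝ) ^ (-α)) :
    ∃ K, ∀ᶠ n in atTop, ∀ m ≤ n / 2, |g (n - m) / g n| ≤ K := by
  obtain ⟨c₁, hc₁, hg₁⟩ := hg.isBigO.exists_pos
  obtain ⟨c₂, hc₂, hg₂⟩ := hg.symm.isBigO.exists_pos
  obtain ⟨N, hN⟩ := eventually_atTop.1 hg₁.bound
  refine ⟨c₁ * 2 ^ α * c₂, ?_⟩
  filter_upwards [hg₂.bound, eventually_ge_atTop (2 * N + 1)] with n hlow hn m hm
  have hn₀ : (0 : ℝ) < n := by exact_mod_cast (Nat.succ_pos _).trans_le hn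
  simp only [Real.norm_eq_abs, abs_of_pos (rpow_pos_of_pos hn₀ _)] at hlow
  have hgn : 0 < |g n| := pos_of_mul_pos_right ((rpow_pos_of_pos hn₀ _).trans_le hlow) hc₂.le
  have hhalf : (n : ℝ) / 2 ≤ (n - m : ℕ) := by
    rw [div_le_iff₀ two_pos]; exact_mod_cast (by omega : n ≤ (n - m) * 2)
  have hup := hN (n - m) (by omega)
  simp only [Real.norm_eq_abs, abs_of_nonneg (rpow_nonneg (Nat.cast_nonneg _) _)] at hup
  rw [abs_div, div_le_iff₀ hgn]
  calc |g (n - m)| ≤ c₁ * ((n - m : ℕ) : ℝ) ^ (-α) := hup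
    _ ≤ c₁ * (2 ^ α * (n : ℝ) ^ (-α)) :=
      mul_le_mul_of_nonneg_left (rpow_neg_le_two_rpow_mul_rpow_neg hα hn₀ hhalf) hc₁.le
    _ ≤ c₁ * (2 ^ α * (c₂ * |g n|)) := by gcongr
    _ = c₁ * 2 ^ α * c₂ * |g n| := by ring

lemma tendsto_sum_range_half_mul_div {f g : ℕ → ℝ} (hf : Summable f)
    (hratio : ∀ m, Tendsto (fun n => g (n - m) / g n) atTop (𝓝 1))
    (hbound : ∃ K, ∀ᶠ n in atTop, ∀ m ≤ n / 2, |g (n - m) / g n| ≤ K) :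
    Tendsto (fun n => (∑ m ∈ range (n / 2 + 1), f m * g (n - m)) / g n) atTop
      (𝓝 (∑' m, f m)) := by
  obtain ⟨K, hK⟩ := hbound
  have hlim : ∀ m, Tendsto (fun n => if m ≤ n / 2 then f m * (g (n - m) / g n) else 0) atTop
      (𝓝 (f m)) := fun m => by
    refine (mul_one (f m) ▸ (hratio m).const_mul (f m)).congr' ?_
    filter_upwards [eventually_ge_atTop (2 * m)] with n hn
    rw [if_pos (by omega)]
  have hdom : ∀ᶠ n in atTop, ∀ m,
      ‖if m ≤ n / 2 then f m * (g (n - m) / g n) else 0‖ ≤ K * |f m| := by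
    filter_upwards [hK] with n hn m
    have hK₀ : 0 ≤ K := (abs_nonneg _).trans (hn 0 (Nat.zero_le _))
    split_ifs with hm
    · rw [norm_mul, Real.norm_eq_abs, Real.norm_eq_abs, mul_comm K]
      exact mul_le_mul_of_nonneg_left (hn m hm) (abs_nonneg _)
    · simpa using mul_nonneg hK₀ (abs_nonneg (f m))
  refine (tendsto_tsum_of_dominated_convergence (hf.abs.mul_left K) hlim hdom).congr fun n => ?_
  rw [tsum_eq_sum (s := range (n / 2 + 1)) fun m hm => if_neg (by simpa using hm), sum_div]
  exact sum_congr rfl fun m hm => by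
    rw [if_pos (Nat.lt_succ_iff.1 (mem_range.1 hm)), mul_div_assoc]

lemma isBigO_sum_range_abs_of_isBigO_rpow {u : ℕ → ℝ} {a : ℝ} (ha₀ : 0 ≤ a) (ha₁ : a < 1)
    (hu : u =O[atTop] fun n => (n : ℝ) ^ (-a)) :
    (fun n => ∑ k ∈ range n, |u k|) =O[atTop] fun n => (n : ℝ) ^ (1 - a) := by
  obtain ⟨M, hM₀, hM⟩ :=
    bound_of_isBigO_nat_atTop (hu.trans (isBigO_rpow_neg_natCast_add_one ha₀))
  refine IsBigO.of_bound (M / (1 - a)) (Eventually.of_forall fun n => ?_)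
  rw [Real.norm_of_nonneg (sum_nonneg fun k _ => abs_nonneg (u k)),
    Real.norm_of_nonneg (by positivity)]
  calc ∑ k ∈ range n, |u k| ≤ ∑ k ∈ range n, M * ((k : ℝ) + 1) ^ (-a) :=
        sum_le_sum fun k _ => by
          have hk : (0 : ℝ) < ((k : ℝ) + 1) ^ (-a) := rpow_pos_of_pos (by positivity) _
          simpa [abs_of_pos hk] using hM hk.ne'
    _ = M * ∑ k ∈ range n, ((k : ℝ) + 1) ^ (-a) := (mul_sum _ _ _).symm
    _ ≤ M * ((n : ℝ) ^ (1 - a) / (1 - a)) :=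
        mul_le_mul_of_nonneg_left (sum_range_rpow_neg_le ha₀ ha₁ n) hM₀.le
    _ = M / (1 - a) * (n : ℝ) ^ (1 - a) := by ring

lemma tendsto_sum_Ico_half_mul_div {f g : ℕ → ℝ} {α β : ℝ} (hα₀ : 0 ≤ α) (hα₁ : α < 1)
    (hβ : 1 < β) (hf : f =O[atTop] fun n => (n : ℝ) ^ (-β))
    (hg : g =Θ[atTop] fun n => (n : ℝ) ^ (-α)) :
    Tendsto (fun n => (∑ m ∈ Ico (n / 2 + 1) (n + 1), f m * g (n - m)) / g n) atTop (𝓝 0) := by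
  obtain ⟨K, hK₀, hK⟩ := hf.exists_pos
  obtain ⟨N, hN⟩ := eventually_atTop.1 hK.bound
  have hS : (fun n => ∑ m ∈ Ico (n / 2 + 1) (n + 1), f m * g (n - m)) =O[atTop]
      fun n => (n : ℝ) ^ (-β) * ∑ k ∈ range n, |g k| := by
    refine IsBigO.of_bound (K * 2 ^ β) ?_
    filter_upwards [eventually_ge_atTop (2 * N + 1)] with n hn
    have hn₀ : (0 : ℝ) < n := by exact_mod_cast (Nat.succ_pos _).trans_le hn
    rw [Real.norm_eq_abs, Real.norm_of_nonneg (by positivity)]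
    calc |∑ m ∈ Ico (n / 2 + 1) (n + 1), f m * g (n - m)|
        ≤ ∑ m ∈ Ico (n / 2 + 1) (n + 1), |f m| * |g (n - m)| := by
          simpa only [abs_mul] using abs_sum_le_sum_abs (fun m => f m * g (n - m)) _
      _ ≤ ∑ m ∈ Ico (n / 2 + 1) (n + 1), K * 2 ^ β * (n : ℝ) ^ (-β) * |g (n - m)| :=
          sum_le_sum fun m hm => by
            have hm := mem_Ico.1 hm
            have hhalf : (n : ℝ) / 2 ≤ m := by
              rw [div_le_iff₀ two_pos]; exact_mod_cast (by omega : n ≤ m * 2)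
            have hfm := hN m (by omega)
            rw [Real.norm_eq_abs, Real.norm_eq_abs,
              abs_of_nonneg (rpow_nonneg m.cast_nonneg _)] at hfm
            gcongr
            calc |f m| ≤ K * (m : ℝ) ^ (-β) := hfm
              _ ≤ K * (2 ^ β * (n : ℝ) ^ (-β)) :=
                  mul_le_mul_of_nonneg_left
                    (rpow_neg_le_two_rpow_mul_rpow_neg (by linarith) hn₀ hhalf) hK₀.le
              _ = K * 2 ^ β * (n : ℝ) ^ (-β) := by ring
      _ = K * 2 ^ β * (n : ℝ) ^ (-β) * ∑ m ∈ Ico (n / 2 + 1) (n + 1), |g (n - m)| :=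
          (mul_sum _ _ _).symm
      _ ≤ K * 2 ^ β * ((n : ℝ) ^ (-β) * ∑ k ∈ range n, |g k|) := by
          rw [← mul_assoc, sum_Ico_reflect (fun k => |g k|) _ le_rfl]
          gcongr
          intro k hk
          simp only [mem_Ico, mem_range] at hk ⊢
          omega
  have hP := (isBigO_refl (fun n : ℕ => (n : ℝ) ^ (-β)) atTop).mul
    (isBigO_sum_range_abs_of_isBigO_rpow hα₀ hα₁ hg.isBigO)
  have hlim : Tendsto (fun n : ℕ => (n : ℝ) ^ (-β) * (n : ℝ) ^ (1 - α) * ((n : ℝ) ^ (-α))⁻¹)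
      atTop (𝓝 0) := by
    refine ((tendsto_rpow_neg_atTop (by linarith : 0 < β - 1)).comp
      tendsto_natCast_atTop_atTop).congr' ?_
    filter_upwards [eventually_gt_atTop 0] with n hn
    have hn : (0 : ℝ) < n := by exact_mod_cast hn
    rw [Function.comp_apply, ← rpow_neg hn.le, neg_neg, ← rpow_add hn, ← rpow_add hn]
    ring_nf
  simpa only [div_eq_mul_inv] using ((hS.trans hP).mul hg.inv.isBigO).trans_tendsto hlim

theorem tendsto_sum_range_mul_div_of_isBigO_of_tendsto {f g : ℕ → ℝ} {α β C : ℝ} (hα₀ : 0 ≤ α)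
    (hα₁ : α < 1) (hβ : 1 < β) (hC : C ≠ 0) (hf : f =O[atTop] fun n => (n : ℝ) ^ (-β))
    (hg : Tendsto (fun n => g n / (n : ℝ) ^ (-α)) atTop (𝓝 C)) :
    Tendsto (fun n => (∑ m ∈ range (n + 1), f m * g (n - m)) / g n) atTop
      (𝓝 (∑' m, f m)) := by
  have hθ : g =Θ[atTop] fun n => (n : ℝ) ^ (-α) := (isTheta_of_div_tendsto_nhds_ne_zero hg hC).symm
  have hhead := tendsto_sum_range_half_mul_div
    (summable_of_isBigO_nat (Real.summable_nat_rpow.2 (by linarith)) hf)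
    (tendsto_sub_div_of_tendsto_div_rpow hC hg) (exists_abs_sub_div_le_of_isTheta hα₀ hθ)
  have htail := tendsto_sum_Ico_half_mul_div hα₀ hα₁ hβ hf hθ
  refine add_zero (∑' m, f m) ▸ (hhead.add htail).congr fun n => ?_
  rw [← add_div, sum_range_add_sum_Ico _ (by omega)]

lemma atTop_inf_principal_dvd {Q : ℕ} (hQ : 0 < Q) :
    atTop ⊓ 𝓟 {n : ℕ | Q ∣ n} = map (Q * ·) atTop := by
  refine le_antisymm (fun s hs => ?_) (le_inf (tendsto_id.const_mul_atTop' hQ) ?_)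
  · obtain ⟨N, hN⟩ := mem_atTop_sets.1 (mem_map.1 hs)
    refine mem_inf_principal.2 (mem_atTop_sets.2 ⟨Q * N, fun n hn ⟨j, hj⟩ => ?_⟩)
    subst hj
    exact hN j (Nat.le_of_mul_le_mul_left hn hQ)
  · exact tendsto_principal.2 (Eventually.of_forall fun j => dvd_mul_right Q j)

lemma sum_range_mul_add_one_of_not_dvd {M : Type*} [AddCommMonoid M] {Q : ℕ} (hQ : 0 < Q)
    {F : ℕ → M} (hF : ∀ n, ¬ Q ∣ n → F n = 0) (j : ℕ) :
    ∑ m ∈ range (Q * j + 1), F m = ∑ i ∈ range (j + 1), F (Q * i) := by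
  rw [← sum_image fun _ _ _ _ h => Nat.eq_of_mul_eq_mul_left hQ h]
  refine (sum_subset (fun m hm => ?_) fun m hm hm' => hF m ?_).symm
  · obtain ⟨i, hi, rfl⟩ := mem_image.1 hm
    exact mem_range.2
      (Nat.lt_succ_of_le (Nat.mul_le_mul_left Q (Nat.lt_succ_iff.1 (mem_range.1 hi))))
  · rintro ⟨i, rfl⟩
    exact hm' (mem_image_of_mem _ (mem_range.2 (Nat.lt_succ_of_le
      (Nat.le_of_mul_le_mul_left (Nat.lt_succ_iff.1 (mem_range.1 hm)) hQ))))

lemma sum_range_mul_sub_mul_pow_of_not_dvd {Q : ℕ} (hQ : 0 < Q) {b : ℕ → ℝ}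
    (hb : ∀ n, ¬ Q ∣ n → b n = 0) (c : ℕ → ℝ) (r : ℝ) (j : ℕ) :
    (∑ m ∈ range (Q * j + 1), b m * c (Q * j - m)) * r ^ (Q * j) =
      ∑ i ∈ range (j + 1), b (Q * i) * r ^ (Q * i) * (c (Q * (j - i)) * r ^ (Q * (j - i))) := by
  rw [sum_mul, sum_range_mul_add_one_of_not_dvd hQ fun m hm => by rw [hb m hm, zero_mul, zero_mul]]
  refine sum_congr rfl fun i hi => ?_
  have hij : i ≤ j := Nat.lt_succ_iff.1 (mem_range.1 hi)
  rw [← Nat.mul_sub, show r ^ (Q * j) = r ^ (Q * i) * r ^ (Q * (j - i)) by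
    rw [← pow_add, ← Nat.mul_add, Nat.add_sub_cancel' hij]]
  ring

lemma isBigO_comp_mul_mul_pow_of_le {u : ℕ → ℝ} (hu : ∀ n, 0 ≤ u n) {Q : ℕ} {r K γ : ℝ}
    (hr : 0 < r) (h : ∀ᶠ j in atTop, u (Q * j) ≤ K * ((Q * j : ℕ) : ℝ) ^ (-γ) / r ^ (Q * j)) :
    (fun j => u (Q * j) * r ^ (Q * j)) =O[atTop] fun j => (j : ℝ) ^ (-γ) := by
  refine IsBigO.of_bound (K * (Q : ℝ) ^ (-γ)) (h.mono fun j hj => ?_)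
  rw [Real.norm_of_nonneg (mul_nonneg (hu _) (by positivity)), Real.norm_of_nonneg (by positivity)]
  rw [le_div_iff₀ (by positivity), Nat.cast_mul, mul_rpow Q.cast_nonneg j.cast_nonneg] at hj
  linarith

lemma tendsto_comp_mul_mul_pow_div_rpow {u : ℕ → ℝ} {Q : ℕ} (hQ : 0 < Q) {C r γ : ℝ}
    (hC : C ≠ 0) (hr : r ≠ 0)
    (h : Tendsto (fun j => u (Q * j) / (C * ((Q * j : ℕ) : ℝ) ^ (-γ) / r ^ (Q * j))) atTop (𝓝 1)) :
    Tendsto (fun j => u (Q * j) * r ^ (Q * j) / (j : ℝ) ^ (-γ)) atTop (𝓝 (C * Q ^ (-γ))) := by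
  refine (one_mul (C * (Q : ℝ) ^ (-γ)) ▸ h.mul_const (C * Q ^ (-γ))).congr' ?_
  filter_upwards [eventually_gt_atTop 0] with j hj
  have hQ' : (0 : ℝ) < Q := by exact_mod_cast hQ
  have hj' : (0 : ℝ) < j := by exact_mod_cast hj
  rw [Nat.cast_mul, mul_rpow hQ'.le hj'.le]
  field_simp

theorem stmt_10_general (Q : ℕ) (hQ : 1 ≤ Q)
    (b c : ℕ → ℝ) (hbnn : ∀ n, 0 ≤ b n)
    (hbsupp : ∀ n, ¬ Q ∣ n → b n = 0)
    (d : ℕ → ℝ) (hd : ∀ n, d n = ∑ m ∈ Finset.range (n + 1), b m * c (n - m))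
    (C₀ r α β : ℝ) (hC₀ : 0 < C₀) (hr : 0 < r) (hα : 0 < α)
    (hαβ : α < 1 ∧ 1 < β)
    (hbO : ∃ K : ℝ, ∀ᶠ n in atTop ⊓ 𝓟 {n : ℕ | Q ∣ n},
      b n ≤ K * (n : ℝ) ^ (-β) / r ^ n)
    (hcasymp : Tendsto (fun n : ℕ => c n / (C₀ * (n : ℝ) ^ (-α) / r ^ n))
      (atTop ⊓ 𝓟 {n : ℕ | Q ∣ n}) (𝓝 1))
    (hBr : (∑' n, b n * r ^ n) ≠ 0) :
    Tendsto (fun n : ℕ => d n / ((∑' m, b m * r ^ m) * c n))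
      (atTop ⊓ 𝓟 {n : ℕ | Q ∣ n}) (𝓝 1) := by
  obtain ⟨K, hK⟩ := hbO
  rw [atTop_inf_principal_dvd hQ, eventually_map] at hK
  rw [atTop_inf_principal_dvd hQ, tendsto_map'_iff] at hcasymp ⊢
  have hB : ∑' j, b (Q * j) * r ^ (Q * j) = ∑' n, b n * r ^ n :=
    (mul_right_injective₀ (Nat.pos_iff_ne_zero.1 hQ)).tsum_eq fun n hn =>
      let ⟨j, hj⟩ := not_imp_comm.1 (hbsupp n) (left_ne_zero_of_mul hn)
      ⟨j, hj.symm⟩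
  have key := tendsto_sum_range_mul_div_of_isBigO_of_tendsto hα.le hαβ.1 hαβ.2
    (by positivity) (isBigO_comp_mul_mul_pow_of_le hbnn hr hK)
    (tendsto_comp_mul_mul_pow_div_rpow hQ hC₀.ne' hr.ne' hcasymp)
  rw [hB] at key
  refine (div_self hBr ▸ key.div_const _).congr fun j => ?_
  simp only [Function.comp_apply, hd, ← sum_range_mul_sub_mul_pow_of_not_dvd hQ hbsupp]
  rw [mul_div_mul_right _ _ (pow_ne_zero _ hr.ne'), div_div, mul_comm (c _)]

/-- Meir–Moon Tauberian theorem for series supported on multiples of Q: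
if b_n = O(n^{−β} r^{−n}) and c_n ~ C₀ n^{−α} r^{−n} along multiples of Q, with
0 < α < 1 < β, B(r) = Σ b_n r^n ≠ 0, then the convolution d_n = Σ b_m c_{n−m}
satisfies d_n ~ B(r)·c_n along multiples of Q. -/
theorem stmt_10 (Q : ℕ) (hQ : 1 ≤ Q)
    (b c : ℕ → ℝ) (hbnn : ∀ n, 0 ≤ b n) (hcnn : ∀ n, 0 ≤ c n)
    (hbsupp : ∀ n, ¬ Q ∣ n → b n = 0) (hcsupp : ∀ n, ¬ Q ∣ n → c n = 0)
    (d : ℕ → ℝ) (hd : ∀ n, d n = ∑ m ∈ Finset.range (n + 1), b m * c (n - m))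
    (C₀ r α β : ℝ) (hC₀ : 0 < C₀) (hr : 0 < r) (hα : 0 < α) (hβpos : 0 < β)
    (hαβ : α < 1 ∧ 1 < β)
    (hbO : ∃ K : ℝ, ∀ᶠ n in atTop ⊓ 𝓟 {n : ℕ | Q ∣ n},
      b n ≤ K * (n : ℝ) ^ (-β) / r ^ n)
    (hcasymp : Tendsto (fun n : ℕ => c n / (C₀ * (n : ℝ) ^ (-α) / r ^ n))
      (atTop ⊓ 𝓟 {n : ℕ | Q ∣ n}) (𝓝 1))
    (hBsum : Summable (fun n => b n * r ^ n))
    (hBr : (∑' n, b n * r ^ n) ≠ 0) :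
    Tendsto (fun n : ℕ => d n / ((∑' m, b m * r ^ m) * c n))
      (atTop ⊓ 𝓟 {n : ℕ | Q ∣ n}) (𝓝 1) :=
  stmt_10_general Q hQ b c hbnn hbsupp d hd C₀ r α β hC₀ hr hα hαβ hbO hcasymp hBr
end

section
/- Let B(z) = Σ_{n≥0} C_n z^{2n+1} be the generating function of rooted binary plane trees (C_n the n-th Catalan number), satisfying B(z) = z(1 + B(z)²). Then for every k ≥ 0, the generating function of binary trees with distance to the border at least k is B_k(z) = z^{2^k − 1}·B(z)^{2^k}, and for m large enough the coefficient of z^{2m+1} in B_k equals (2^k/(2m − 2^k + 2))·binom(2m − 2^k + 2, m − 2^k + 1). -/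
/-!
Writing `B(z) = z·C(z²)` with `C = 1 + z·C²` the Catalan series gives `B = z(1 + B²)`, and
unrolling `B_{k+1} = z·B_k²` gives `B_k = z^{2^k-1}·B^{2^k}`. The coefficients of the powers
of `B` are ballot numbers: comparing coefficients in `B^{j+1} = z·B^j + z·B^{j+2}` gives
Pascal's recursion for `[z^N] B^j`, and `N·[z^N] B^j = j·binom(N, (N-j)/2)` follows by
induction, which is what Lagrange inversion for `ψ = 1 + z²` predicts.
-/

open PowerSeries

namespace PowerSeries

section BinaryTreeSeries

variable (R : Type*) [CommRing R]

noncomputable def binaryTreeSeries : R⟦X⟧ :=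
  X * expand 2 two_ne_zero (map (Nat.castRingHom R) catalanSeries)

theorem binaryTreeSeries_eq_mk :
    binaryTreeSeries R = mk fun n => if Odd n then (catalan ((n - 1) / 2) : R) else 0 := by
  ext (_ | n)
  · simp [binaryTreeSeries]
  · simp [binaryTreeSeries, coeff_succ_X_mul, coeff_expand, Nat.odd_add_one, even_iff_two_dvd]

theorem binaryTreeSeries_eq_X_mul : binaryTreeSeries R = X * (1 + binaryTreeSeries R ^ 2) := by
  have hC := congrArg (expand 2 two_ne_zero ∘ map (Nat.castRingHom R))
    catalanSeries_sq_mul_X_add_one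
  simp only [Function.comp_apply, map_add, map_mul, map_pow, map_one, map_X, expand_X] at hC
  rw [binaryTreeSeries]
  linear_combination (-X : R⟦X⟧) * hC

end BinaryTreeSeries

section Lagrange

variable {R : Type*} [CommRing R] {B : R⟦X⟧}

theorem coeff_pow_self_of_eq_X_mul (hB : B = X * (1 + B ^ 2)) (j : ℕ) :
    coeff j (B ^ j) = 1 := by
  have hB0 : constantCoeff B = 0 := by rw [hB]; simp
  have hBj : B ^ j = X ^ j * (1 + B ^ 2) ^ j := by rw [← mul_pow, ← hB]
  simp [hBj, coeff_X_pow_mul', hB0]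

theorem coeff_succ_pow_succ_of_eq_X_mul (hB : B = X * (1 + B ^ 2)) (N j : ℕ) :
    coeff (N + 1) (B ^ (j + 1)) = coeff N (B ^ j) + coeff N (B ^ (j + 2)) := by
  have : B ^ (j + 1) = X * B ^ j + X * B ^ (j + 2) := by linear_combination B ^ j * hB
  rw [this, map_add, coeff_succ_X_mul, coeff_succ_X_mul]

theorem coeff_pow_eq_choose_of_eq_X_mul [IsDomain R] [CharZero R] (hB : B = X * (1 + B ^ 2))
    (h j : ℕ) :
    ((j + 2 * h : ℕ) : R) * coeff (j + 2 * h) (B ^ j) = j * (j + 2 * h).choose h := by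
  induction h generalizing j with
  | zero => simp [coeff_pow_self_of_eq_X_mul hB]
  | succ h ih =>
    induction j with
    | zero => simp [coeff_one]
    | succ j ihj =>
      have ih₂ := ih (j + 2)
      rw [show j + 2 + 2 * h = j + 2 * (h + 1) by ring] at ih₂
      have hpascal : (j + 2 * (h + 1)).choose (h + 1) * (h + 1) =
          (j + 2 * (h + 1)).choose h * (j + h + 2) := by
        rw [Nat.choose_succ_right_eq]
        congr 1
        omega
      have hN : ((j + 2 * (h + 1) : ℕ) : R) ≠ 0 := Nat.cast_ne_zero.mpr (by omega)
      rw [show j + 1 + 2 * (h + 1) = j + 2 * (h + 1) + 1 by ring,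
        coeff_succ_pow_succ_of_eq_X_mul hB, Nat.choose_succ_succ', ← mul_right_inj' hN]
      replace hpascal := congrArg (Nat.cast (R := R)) hpascal
      push_cast at ihj ih₂ hpascal ⊢
      linear_combination (j + 2 * (h + 1) + 1 : R) * (ihj + ih₂) - 2 * hpascal

end Lagrange

theorem eq_X_pow_mul_pow_of_succ_eq_X_mul_sq {R : Type*} [CommSemiring R] {B : R⟦X⟧}
    {Bk : ℕ → R⟦X⟧} (h0 : Bk 0 = B) (hsucc : ∀ k, Bk (k + 1) = X * Bk k ^ 2) (k : ℕ) :
    Bk k = X ^ (2 ^ k - 1) * B ^ 2 ^ k := by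
  induction k with
  | zero => simpa using h0
  | succ k ih =>
    have : 2 ^ (k + 1) - 1 = 2 * (2 ^ k - 1) + 1 := by
      have := Nat.one_le_two_pow (n := k)
      rw [pow_succ]
      omega
    rw [hsucc, ih, this, pow_succ' 2 k]
    ring

end PowerSeries

/-- Let B(z) = Σ_{n≥0} C_n z^{2n+1} (C_n the Catalan numbers) be the
generating function of rooted binary plane trees, so B = z(1 + B²). The generating
functions B_k of binary trees with distance to the border ≥ k (B_0 = B,
B_k = z·B_{k−1}², from G(z,w) = zw²) satisfy B_k = z^{2^k−1}·B^{2^k}, and for all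
large m the coefficient of z^{2m+1} in B_k is
(2^k/(2m−2^k+2))·binom(2m−2^k+2, m−2^k+1). -/
theorem stmt_18 (B : PowerSeries ℝ)
    (hB : B = PowerSeries.mk fun n => if Odd n then (catalan ((n - 1) / 2) : ℝ) else 0)
    (Bk : ℕ → PowerSeries ℝ)
    (hBk0 : Bk 0 = B)
    (hBkrec : ∀ k, Bk (k + 1) = PowerSeries.X * (Bk k) ^ 2) :
    B = PowerSeries.X * (1 + B ^ 2) ∧
    (∀ k : ℕ, Bk k = PowerSeries.X ^ (2 ^ k - 1) * B ^ (2 ^ k)) ∧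
    (∀ k : ℕ, ∃ M : ℕ, ∀ m : ℕ, M ≤ m →
      PowerSeries.coeff (2 * m + 1) (Bk k) =
        ((2 ^ k : ℝ) / ((2 * m + 2 - 2 ^ k : ℕ) : ℝ)) *
          ((2 * m + 2 - 2 ^ k).choose (m + 1 - 2 ^ k) : ℝ)) := by
  have hB' : B = X * (1 + B ^ 2) := by
    rw [hB, ← binaryTreeSeries_eq_mk]
    exact binaryTreeSeries_eq_X_mul ℝ
  have hBk := eq_X_pow_mul_pow_of_succ_eq_X_mul_sq hBk0 hBkrec
  refine ⟨hB', hBk, fun k => ⟨2 ^ k, fun m hm => ?_⟩⟩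
  have hk := Nat.one_le_two_pow (n := k)
  have hN : 2 * m + 2 - 2 ^ k = 2 ^ k + 2 * (m + 1 - 2 ^ k) := by omega
  have hN0 : ((2 ^ k + 2 * (m + 1 - 2 ^ k) : ℕ) : ℝ) ≠ 0 := by positivity
  have hcoeff := coeff_pow_eq_choose_of_eq_X_mul hB' (m + 1 - 2 ^ k) (2 ^ k)
  rw [hBk, show 2 * m + 1 = 2 ^ k + 2 * (m + 1 - 2 ^ k) + (2 ^ k - 1) by omega, coeff_X_pow_mul,
    hN, div_mul_eq_mul_div, eq_div_iff hN0, mul_comm]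
  exact_mod_cast hcoeff
end

section
/- For rooted binary plane trees, the ratio of the number B_n^{(k)} of binary trees with n nodes and distance to the border at least k, to the total number B_n of binary trees with n nodes, tends to 2^{k − 2^k + 1} as n → ∞ through odd integers. More precisely, with n = 2m+1, B_n^{(k)}/B_n = [(2^k/(2m−2^k+2))·binom(2m−2^k+2, m−2^k+1)] / C_m → 2^{k−2^k+1} as m → ∞. -/
/-!
Write `2 ^ k = j + 1`. Expanding the binomial coefficient and the Catalan number in factorials,
the ratio equals `2 ^ k * ∏_{i < j} (m - i) / (2m - i)` once `m ≥ j`. Each of the `j` factors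
tends to `1 / 2`, so the limit is `2 ^ k * 2 ^ (-j) = 2 ^ (k - 2 ^ k + 1)`.
-/

open Filter Topology Finset Nat

theorem catalan_mul_factorial_mul_factorial (m : ℕ) :
    catalan m * m ! * (m + 1)! = (2 * m)! := by
  have h := choose_mul_factorial_mul_factorial (n := 2 * m) (k := m) (by omega)
  rw [show 2 * m - m = m by omega, ← centralBinom_eq_two_mul_choose,
    ← succ_mul_catalan_eq_centralBinom] at h
  rw [← h, factorial_succ]
  ring

theorem catalan_ne_zero (m : ℕ) : catalan m ≠ 0 := fun h =>
  centralBinom_ne_zero m (by rw [← succ_mul_catalan_eq_centralBinom, h, mul_zero])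

theorem choose_mul_descFactorial_two_mul {m j : ℕ} (hj : j ≤ m) :
    (2 * m + 1 - j).choose (m - j) * (2 * m).descFactorial j
      = catalan m * (2 * m + 1 - j) * m.descFactorial j := by
  have hC := choose_mul_factorial_mul_factorial (n := 2 * m + 1 - j) (k := m - j) (by omega)
  rw [show 2 * m + 1 - j - (m - j) = m + 1 by omega] at hC
  have h2m := factorial_mul_descFactorial (n := 2 * m) (k := j) (by omega)
  have hm := factorial_mul_descFactorial (n := m) (k := j) hj
  have hsucc : (2 * m + 1 - j)! = (2 * m + 1 - j) * (2 * m - j)! := by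
    rw [show 2 * m + 1 - j = (2 * m - j) + 1 by omega, factorial_succ]
  apply Nat.eq_of_mul_eq_mul_right
    (mul_pos (mul_pos (factorial_pos (m - j)) (factorial_pos (m + 1))) (factorial_pos (2 * m - j)))
  calc _ = (2 * m + 1 - j).choose (m - j) * (m - j)! * (m + 1)!
          * ((2 * m - j)! * (2 * m).descFactorial j) := by ring
    _ = catalan m * m ! * (m + 1)! * ((2 * m + 1 - j) * (2 * m - j)!) := by
      rw [hC, h2m, hsucc, catalan_mul_factorial_mul_factorial]; ring
    _ = _ := by rw [← hm]; ring

theorem cast_descFactorial_eq_prod {R : Type*} [CommRing R] {n j : ℕ} (hj : j ≤ n) :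
    (n.descFactorial j : R) = ∏ i ∈ range j, ((n : R) - i) := by
  rw [descFactorial_eq_prod_range, Nat.cast_prod]
  exact prod_congr rfl fun i hi => Nat.cast_sub (by simp at hi; omega)

theorem tendsto_sub_div_mul_sub (a c : ℝ) (ha : a ≠ 0) :
    Tendsto (fun x : ℝ => (x - c) / (a * x - c)) atTop (𝓝 a⁻¹) := by
  have hc : Tendsto (fun x : ℝ => c / x) atTop (𝓝 0) := tendsto_const_nhds.div_atTop tendsto_id
  have h : Tendsto (fun x : ℝ => (1 - c / x) / (a - c / x)) atTop (𝓝 ((1 - 0) / (a - 0))) :=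
    (tendsto_const_nhds.sub hc).div (tendsto_const_nhds.sub hc) (by simpa using ha)
  rw [sub_zero, sub_zero, one_div] at h
  refine h.congr' ?_
  filter_upwards [eventually_ne_atTop 0] with x hx
  conv_rhs => rw [← div_div_div_cancel_right₀ hx]
  rw [sub_div (x : ℝ), sub_div (a * x), div_self hx, mul_div_cancel_right₀ a hx]

theorem tendsto_descFactorial_div_descFactorial_mul (a j : ℕ) (ha : 0 < a) :
    Tendsto (fun m : ℕ => (m.descFactorial j : ℝ) / ((a * m).descFactorial j)) atTop
      (𝓝 ((a : ℝ)⁻¹ ^ j)) := by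
  have hfactor (i : ℕ) :
      Tendsto (fun m : ℕ => ((m : ℝ) - i) / (a * m - i)) atTop (𝓝 (a : ℝ)⁻¹) :=
    (tendsto_sub_div_mul_sub a i (by positivity)).comp tendsto_natCast_atTop_atTop
  have h := tendsto_finsetProd (range j) fun i _ => hfactor i
  rw [prod_const, card_range] at h
  refine h.congr' ?_
  filter_upwards [eventually_ge_atTop j] with m hm
  rw [cast_descFactorial_eq_prod hm, cast_descFactorial_eq_prod (by nlinarith), prod_div_distrib]
  push_cast
  rfl

theorem choose_div_div_catalan_eq_descFactorial_div {m j : ℕ} (hj : j ≤ m) :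
    ((2 * m + 1 - j).choose (m - j) : ℝ) / ((2 * m + 1 - j : ℕ) : ℝ) / catalan m
      = (m.descFactorial j : ℝ) / ((2 * m).descFactorial j) := by
  have h : ((2 * m + 1 - j).choose (m - j) * (2 * m).descFactorial j : ℝ)
      = catalan m * ((2 * m + 1 - j : ℕ) : ℝ) * m.descFactorial j := by
    exact_mod_cast choose_mul_descFactorial_two_mul hj
  have hD : ((2 * m + 1 - j : ℕ) : ℝ) ≠ 0 := by norm_cast; omega
  have hC : (catalan m : ℝ) ≠ 0 := by exact_mod_cast catalan_ne_zero m
  have hF : ((2 * m).descFactorial j : ℝ) ≠ 0 := by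
    exact_mod_cast descFactorial_eq_zero_iff_lt.not.mpr (by omega)
  field_simp
  linear_combination h

/-- for rooted binary plane trees, with n = 2m+1 nodes, the ratio
B_n^{(k)}/B_n = [(2^k/(2m−2^k+2))·binom(2m−2^k+2, m−2^k+1)] / C_m of the number of
binary trees with distance to the border ≥ k to the total number of binary trees
tends to 2^{k−2^k+1} as m → ∞. -/
theorem stmt_19 (k : ℕ) :
    Tendsto (fun m : ℕ =>
        (((2 ^ k : ℝ) / ((2 * m + 2 - 2 ^ k : ℕ) : ℝ)) *
            ((2 * m + 2 - 2 ^ k).choose (m + 1 - 2 ^ k) : ℝ)) /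
          (catalan m : ℝ))
      atTop (𝓝 ((2 : ℝ) ^ ((k : ℤ) - 2 ^ k + 1))) := by
  obtain ⟨j, hk⟩ : ∃ j, 2 ^ k = j + 1 :=
    ⟨2 ^ k - 1, (Nat.sub_add_cancel Nat.one_le_two_pow).symm⟩
  have hlim : (2 : ℝ) ^ ((k : ℤ) - 2 ^ k + 1) = 2 ^ k * ((2 : ℕ) : ℝ)⁻¹ ^ j := by
    rw [Nat.cast_ofNat, inv_pow, ← zpow_natCast, ← zpow_natCast, ← zpow_neg,
      ← zpow_add₀ two_ne_zero]
    have hkZ : (2 : ℤ) ^ k = j + 1 := by exact_mod_cast hk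
    rw [hkZ]
    ring_nf
  rw [hlim]
  refine ((tendsto_descFactorial_div_descFactorial_mul 2 j two_pos).const_mul _).congr' ?_
  filter_upwards [eventually_ge_atTop j] with m hm
  rw [← choose_div_div_catalan_eq_descFactorial_div hm, hk,
    show 2 * m + 2 - (j + 1) = 2 * m + 1 - j by omega, show m + 1 - (j + 1) = m - j by omega]
  ring
end
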